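/- arXiv:math/0701699 — 6 statements merged into one kernel-verified Lean document; each statement's English description precedes it below -/
import Mathlib

section
/- Let C be a composition algebra and x, y ∈ C with N(x) = N(y) = 1 (so y is invertible with y⁻¹ the unique two-sided inverse). Then (xy⁻¹)² − ⟨x,y⟩·(xy⁻¹) + 1 = 0, and moreover (xy⁻¹)² = −1 if and only if ⟨x,y⟩ = 0. -/
/-!
Linearizing `N (a * c) = N a * N c` in `c` and then in `a` gives
`⟨ab, cd⟩ + ⟨ad, cb⟩ = ⟨a, c⟩⟨b, d⟩`. Taking `a = b = z`, `c = 1` shows that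
`z² − ⟨z, 1⟩ z + N(z) 1` is orthogonal to everything, so every `z` satisfies this quadratic
equation. For `z = x y⁻¹` one has `N z = 1` and, by the same identity, `⟨z, 1⟩ = ⟨x, y⟩`.
Finally `z² = −1` forces `⟨x, y⟩ z = 0`, and `z ≠ 0` since `N z = 1`.
-/

/-- The bilinear (polar) form associated to a quadratic form `N`. -/
def polarForm {k C : Type*} [Field k] [AddCommGroup C] (N : C → k) (x y : C) : k :=
  N (x + y) - N x - N y

section PolarForm

variable {k C : Type*} [Field k] [AddCommGroup C] {N : C → k}

theorem polarForm_comm (N : C → k) (x y : C) : polarForm N x y = polarForm N y x := by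
  simp only [polarForm, add_comm]
  ring

theorem apply_add_eq_add_polarForm (N : C → k) (x y : C) :
    N (x + y) = N x + N y + polarForm N x y := by
  simp only [polarForm]
  ring

variable (hadd : ∀ x y z : C, polarForm N (x + y) z = polarForm N x z + polarForm N y z)
include hadd

theorem polarForm_add_right (x y z : C) :
    polarForm N x (y + z) = polarForm N x y + polarForm N x z := by
  rw [polarForm_comm, hadd, polarForm_comm N y, polarForm_comm N z]

theorem polarForm_zero_left (z : C) : polarForm N 0 z = 0 := by
  simpa using hadd 0 0 z

theorem apply_zero_of_polarForm_add : N 0 = 0 := by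
  have h := polarForm_zero_left hadd 0
  simp only [polarForm, add_zero] at h
  linear_combination -h

theorem polarForm_neg_left (x z : C) : polarForm N (-x) z = -polarForm N x z := by
  have h := hadd (-x) x z
  rw [neg_add_cancel, polarForm_zero_left hadd] at h
  linear_combination -h

theorem polarForm_sub_left (x y z : C) :
    polarForm N (x - y) z = polarForm N x z - polarForm N y z := by
  rw [sub_eq_add_neg, hadd, polarForm_neg_left hadd, sub_eq_add_neg]

end PolarForm

/-- The conjugate `ȳ`; for `N y = 1` it is the `y⁻¹` of the statement. -/
def polarConj {k C : Type*} [Field k] [NonAssocRing C] [Module k C] (N : C → k) (y : C) : C :=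
  polarForm N y 1 • (1 : C) - y

theorem mul_polarConj {k C : Type*} [Field k] [NonAssocRing C] [Module k C]
    [SMulCommClass k C C] (N : C → k) (a y : C) :
    a * polarConj N y = polarForm N y 1 • a - a * y := by
  rw [polarConj, mul_sub, mul_smul_comm, mul_one]

section CompositionAlgebra

variable {k C : Type*} [Field k] [NonAssocRing C] {N : C → k}
variable (hmul : ∀ x y : C, N (x * y) = N x * N y)
include hmul

theorem apply_one_of_apply_eq_one {x : C} (hx : N x = 1) : N 1 = 1 := by
  simpa [hx] using (hmul x 1).symm

theorem polarForm_mul_mul_right (a b c : C) :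
    polarForm N (a * c) (b * c) = polarForm N a b * N c := by
  simp only [polarForm]
  rw [← add_mul, hmul, hmul, hmul]
  ring

theorem polarForm_mul_mul_left (a b c : C) :
    polarForm N (a * b) (a * c) = N a * polarForm N b c := by
  simp only [polarForm]
  rw [← mul_add, hmul, hmul, hmul]
  ring

variable (hadd : ∀ x y z : C, polarForm N (x + y) z = polarForm N x z + polarForm N y z)
include hadd

theorem polarForm_mul_add_polarForm_mul (a b c d : C) :
    polarForm N (a * b) (c * d) + polarForm N (a * d) (c * b)
      = polarForm N a c * polarForm N b d := by
  have h := polarForm_mul_mul_right hmul a c (b + d)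
  rw [mul_add, mul_add, hadd, polarForm_add_right hadd, polarForm_add_right hadd,
    apply_add_eq_add_polarForm N b d, polarForm_mul_mul_right hmul,
    polarForm_mul_mul_right hmul] at h
  linear_combination h

theorem polarForm_mul_self_left (z u : C) :
    polarForm N (z * z) u = polarForm N z 1 * polarForm N z u - N z * polarForm N u 1 := by
  have hexch := polarForm_mul_add_polarForm_mul hmul hadd z z 1 u
  have hleft := polarForm_mul_mul_left hmul z u 1
  rw [one_mul, one_mul] at hexch
  rw [mul_one] at hleft
  linear_combination hexch - hleft

variable [Module k C]
variable (hsmul : ∀ (a : k) (x y : C), polarForm N (a • x) y = a * polarForm N x y)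
include hsmul

theorem polarForm_mul_polarConj_one [SMulCommClass k C C] (a y : C) :
    polarForm N (a * polarConj N y) 1 = polarForm N a y := by
  have hexch := polarForm_mul_add_polarForm_mul hmul hadd a y 1 1
  rw [mul_one, one_mul, mul_one] at hexch
  rw [mul_polarConj, polarForm_sub_left hadd, hsmul]
  linear_combination -hexch

variable (hnondeg : ∀ x : C, (∀ y : C, polarForm N x y = 0) → x = 0)
include hnondeg

theorem mul_self_sub_smul_add_smul_one_eq_zero (z : C) :
    z * z - polarForm N z 1 • z + N z • (1 : C) = 0 := by
  refine hnondeg _ fun u => ?_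
  rw [hadd, polarForm_sub_left hadd, hsmul, hsmul, polarForm_mul_self_left hmul hadd,
    polarForm_comm N 1 u]
  ring

variable [SMulCommClass k C C]

theorem self_mul_polarConj (y : C) : y * polarConj N y = N y • (1 : C) := by
  have h := mul_self_sub_smul_add_smul_one_eq_zero hmul hadd hsmul hnondeg y
  rw [mul_polarConj]
  linear_combination (norm := module) -h

theorem apply_polarConj_of_apply_eq_one {y : C} (hy : N y = 1) : N (polarConj N y) = 1 := by
  have h := hmul y (polarConj N y)
  rw [self_mul_polarConj hmul hadd hsmul hnondeg, hy, one_smul,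
    apply_one_of_apply_eq_one hmul hy, one_mul] at h
  exact h.symm

end CompositionAlgebra

theorem mul_self_eq_neg_one_iff {k C : Type*} [Field k] [NonAssocRing C] [Module k C]
    {z : C} {t : k} (h : z * z - t • z + 1 = 0) (hz : z ≠ 0) : z * z = -1 ↔ t = 0 := by
  rw [← smul_eq_zero_iff_left hz]
  constructor <;> intro h'
  · linear_combination (norm := module) h' - h
  · linear_combination (norm := module) h + h'

theorem norm_one_min_eq_general (k C : Type*) [Field k] [NonAssocRing C] [Module k C]
    [SMulCommClass k C C]
    (N : C → k)
    (hpolar_add : ∀ x y z : C, polarForm N (x + y) z = polarForm N x z + polarForm N y z)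
    (hpolar_smul : ∀ (a : k) (x y : C), polarForm N (a • x) y = a * polarForm N x y)
    (hN_nondeg : ∀ x : C, (∀ y : C, polarForm N x y = 0) → x = 0)
    (hN_mul : ∀ x y : C, N (x * y) = N x * N y)
    (x y : C) (hx : N x = 1) (hy : N y = 1) :
    (x * (polarForm N y 1 • (1 : C) - y)) * (x * (polarForm N y 1 • (1 : C) - y))
        - polarForm N x y • (x * (polarForm N y 1 • (1 : C) - y)) + 1 = 0 ∧
    ((x * (polarForm N y 1 • (1 : C) - y)) * (x * (polarForm N y 1 • (1 : C) - y)) = -1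
        ↔ polarForm N x y = 0) := by
  set z := x * polarConj N y
  have hNz : N z = 1 := by
    rw [hN_mul, hx, apply_polarConj_of_apply_eq_one hN_mul hpolar_add hpolar_smul hN_nondeg hy,
      one_mul]
  have hquad : z * z - polarForm N x y • z + 1 = 0 := by
    have h := mul_self_sub_smul_add_smul_one_eq_zero hN_mul hpolar_add hpolar_smul hN_nondeg z
    rwa [polarForm_mul_polarConj_one hN_mul hpolar_add hpolar_smul, hNz, one_smul] at h
  have hz : z ≠ 0 := by
    intro h0
    rw [h0, apply_zero_of_polarForm_add hpolar_add] at hNz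
    exact zero_ne_one hNz
  exact ⟨hquad, mul_self_eq_neg_one_iff hquad hz⟩

/-- For norm-one `x, y` in a composition algebra, with `y⁻¹ = ⟨y,1⟩·1 − y`,
one has `(xy⁻¹)² − ⟨x,y⟩·(xy⁻¹) + 1 = 0`, and `(xy⁻¹)² = −1 ↔ x ⊥ y`. -/
theorem norm_one_min_eq (k C : Type*) [Field k] [NonAssocRing C] [Module k C]
    [SMulCommClass k C C] [IsScalarTower k C C] [FiniteDimensional k C]
    (N : C → k)
    (hN_smul : ∀ (a : k) (x : C), N (a • x) = a ^ 2 * N x)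
    (hpolar_add : ∀ x y z : C, polarForm N (x + y) z = polarForm N x z + polarForm N y z)
    (hpolar_smul : ∀ (a : k) (x y : C), polarForm N (a • x) y = a * polarForm N x y)
    (hN_nondeg : ∀ x : C, (∀ y : C, polarForm N x y = 0) → x = 0)
    (hN_mul : ∀ x y : C, N (x * y) = N x * N y)
    (x y : C) (hx : N x = 1) (hy : N y = 1) :
    (x * (polarForm N y 1 • (1 : C) - y)) * (x * (polarForm N y 1 • (1 : C) - y))
        - polarForm N x y • (x * (polarForm N y 1 • (1 : C) - y)) + 1 = 0 ∧
    ((x * (polarForm N y 1 • (1 : C) - y)) * (x * (polarForm N y 1 • (1 : C) - y)) = -1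
        ↔ polarForm N x y = 0) :=
  norm_one_min_eq_general k C N hpolar_add hpolar_smul hN_nondeg hN_mul x y hx hy
end

section
/- In the Zorn vector matrix algebra over a field k, an element x = [[a, α],[β, b]] of norm 1 satisfies x³ = 1 if and only if either (α = β = 0, b = a⁻¹, and a³ = 1) or ((α, β) ≠ (0,0) and b = −1 − a). -/
/-- Zorn vector matrices `[[a, α], [β, b]]` over a field `k`. -/
@[ext]
structure Zorn (k : Type*) where
  a : k
  α : Fin 3 → k
  β : Fin 3 → k
  b : k

namespace Zorn

variable {k : Type*} [Field k]

/-- Dot product on `k³`. -/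
def dot (u v : Fin 3 → k) : k := u 0 * v 0 + u 1 * v 1 + u 2 * v 2

/-- Cross product on `k³`. -/
def cross (u v : Fin 3 → k) : Fin 3 → k :=
  ![u 1 * v 2 - u 2 * v 1, u 2 * v 0 - u 0 * v 2, u 0 * v 1 - u 1 * v 0]

/-- Zorn vector matrix multiplication. -/
instance : Mul (Zorn k) :=
  ⟨fun x y =>
    ⟨x.a * y.a + dot x.α y.β,
     fun i => x.a * y.α i + y.b * x.α i - cross x.β y.β i,
     fun i => y.a * x.β i + x.b * y.β i + cross x.α y.α i,
     dot x.β y.α + x.b * y.b⟩⟩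

instance : One (Zorn k) := ⟨⟨1, 0, 0, 1⟩⟩
instance : Zero (Zorn k) := ⟨⟨0, 0, 0, 0⟩⟩
instance : Add (Zorn k) := ⟨fun x y => ⟨x.a + y.a, x.α + y.α, x.β + y.β, x.b + y.b⟩⟩
instance : Neg (Zorn k) := ⟨fun x => ⟨-x.a, -x.α, -x.β, -x.b⟩⟩
instance : SMul k (Zorn k) := ⟨fun c x => ⟨c * x.a, c • x.α, c • x.β, c * x.b⟩⟩

/-- The norm (determinant) of a Zorn vector matrix. -/
def N (x : Zorn k) : k := x.a * x.b - dot x.α x.β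

/-- The bilinear form associated with the norm. -/
def polarN (x y : Zorn k) : k := N (x + y) - N x - N y


/-! Every `x` satisfies the Cayley–Hamilton relation `x² = t x - N x` with `t = a + b`, hence
`x³ = (t² - N x) x - t N x`. When `N x = 1`, `x³ = 1` thus says `(t² - 1) α = (t² - 1) β = 0` and
`(t² - 1) a - t = (t² - 1) b - t = 1`. If `(α, β) ≠ 0` this forces `t² = 1`, and then `t = -1`;
if `α = β = 0`, then `a b = 1` and the conditions reduce to `a³ = 1`. -/

def trace (x : Zorn k) : k := x.a + x.b

lemma mul_def (x y : Zorn k) : x * y =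
    ⟨x.a * y.a + dot x.α y.β,
     fun i => x.a * y.α i + y.b * x.α i - cross x.β y.β i,
     fun i => y.a * x.β i + x.b * y.β i + cross x.α y.α i,
     dot x.β y.α + x.b * y.b⟩ := rfl

lemma mk_eq_one_iff {a b : k} {α β : Fin 3 → k} :
    (⟨a, α, β, b⟩ : Zorn k) = 1 ↔ a = 1 ∧ α = 0 ∧ β = 0 ∧ b = 1 :=
  Iff.of_eq (Zorn.mk.injEq ..)

lemma mul_self_eq (x : Zorn k) :
    x * x = ⟨trace x * x.a - N x, trace x • x.α, trace x • x.β, trace x * x.b - N x⟩ := by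
  ext i <;> try fin_cases i
  all_goals
    simp only [mul_def, trace, N, dot, cross, Pi.smul_apply, smul_eq_mul, Fin.zero_eta, Fin.mk_one,
      Fin.reduceFinMk, Matrix.cons_val_zero, Matrix.cons_val_one, Matrix.cons_val]
    ring

lemma mul_self_mul_self_eq (x : Zorn k) :
    x * x * x =
      ⟨(trace x ^ 2 - N x) * x.a - trace x * N x, (trace x ^ 2 - N x) • x.α,
        (trace x ^ 2 - N x) • x.β, (trace x ^ 2 - N x) * x.b - trace x * N x⟩ := by
  rw [mul_self_eq]
  ext i <;> try fin_cases i
  all_goals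
    simp only [mul_def, trace, N, dot, cross, Pi.smul_apply, smul_eq_mul, Fin.zero_eta, Fin.mk_one,
      Fin.reduceFinMk, Matrix.cons_val_zero, Matrix.cons_val_one, Matrix.cons_val]
    ring

end Zorn

lemma cube_eq_one_iff_of_mul_eq_one {R : Type*} [CommRing R] {a b : R} (hab : a * b = 1) :
    ((a + b) ^ 2 - 1) * a - (a + b) = 1 ∧ ((a + b) ^ 2 - 1) * b - (a + b) = 1 ↔ a ^ 3 = 1 := by
  constructor
  · rintro ⟨ha, -⟩
    linear_combination ha - (2 * a + b) * hab
  · intro ha3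
    constructor
    · linear_combination ha3 + (2 * a + b) * hab
    · linear_combination (2 * b + a + a ^ 2 * b ^ 2 + a * b + 1) * hab - b ^ 3 * ha3

namespace Zorn

variable {k : Type*} [Field k]

/-- A norm-one Zorn vector matrix `x` satisfies `x³ = 1` iff either
(`α = β = 0`, `b = a⁻¹` and `a³ = 1`) or (`(α, β) ≠ (0,0)` and `b = −1 − a`). -/
theorem cube_eq_one_iff (x : Zorn k) (hx : N x = 1) :
    (x * x) * x = 1 ↔
      (x.α = 0 ∧ x.β = 0 ∧ x.b = x.a⁻¹ ∧ x.a ^ 3 = 1) ∨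
      (¬(x.α = 0 ∧ x.β = 0) ∧ x.b = -1 - x.a) := by
  rw [mul_self_mul_self_eq, mk_eq_one_iff, hx, mul_one]
  have ht : trace x = x.a + x.b := rfl
  by_cases h0 : x.α = 0 ∧ x.β = 0
  · obtain ⟨hα, hβ⟩ := h0
    have hab : x.a * x.b = 1 := by simpa [N, dot, hα, hβ] using hx
    simp only [hα, hβ, smul_zero, true_and, not_true, false_and, or_false, ht]
    rw [← cube_eq_one_iff_of_mul_eq_one hab, iff_and_self]
    exact fun _ => eq_inv_of_mul_eq_one_right hab
  · rw [or_iff_right (fun h => h0 ⟨h.1, h.2.1⟩), and_iff_right h0]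
    constructor
    · rintro ⟨ha, hα, hβ, -⟩
      have ht2 : trace x ^ 2 - 1 = 0 := by
        rcases not_and_or.mp h0 with h | h
        · exact (smul_eq_zero.mp hα).resolve_right h
        · exact (smul_eq_zero.mp hβ).resolve_right h
      linear_combination x.a * ht2 - ha - ht
    · intro hb
      have ht1 : trace x = -1 := by rw [ht, hb]; ring
      norm_num [ht1]

end Zorn
end

section
/- In the Zorn vector matrix algebra over a field k, an element x = [[a, α],[β, b]] of norm 1 satisfies x² = −1 if and only if either (α = β = 0, b = a⁻¹, and a² = −1) or ((α, β) ≠ (0,0) and b = −a). -/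
namespace Zorn

variable {k : Type*} [Field k]

@[simp] lemma mul_a (x y : Zorn k) : (x * y).a = x.a * y.a + dot x.α y.β := rfl
@[simp] lemma mul_α (x y : Zorn k) :
    (x * y).α = fun i => x.a * y.α i + y.b * x.α i - cross x.β y.β i := rfl
@[simp] lemma mul_β (x y : Zorn k) :
    (x * y).β = fun i => y.a * x.β i + x.b * y.β i + cross x.α y.α i := rfl
@[simp] lemma mul_b (x y : Zorn k) : (x * y).b = dot x.β y.α + x.b * y.b := rfl

@[simp] lemma neg_a (x : Zorn k) : (-x).a = -x.a := rfl
@[simp] lemma neg_α (x : Zorn k) : (-x).α = -x.α := rfl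
@[simp] lemma neg_β (x : Zorn k) : (-x).β = -x.β := rfl
@[simp] lemma neg_b (x : Zorn k) : (-x).b = -x.b := rfl

@[simp] lemma one_a : (1 : Zorn k).a = 1 := rfl
@[simp] lemma one_α : (1 : Zorn k).α = 0 := rfl
@[simp] lemma one_β : (1 : Zorn k).β = 0 := rfl
@[simp] lemma one_b : (1 : Zorn k).b = 1 := rfl

lemma dot_comm (u v : Fin 3 → k) : dot u v = dot v u := by
  simp only [dot]
  ring

@[simp] lemma cross_self (u : Fin 3 → k) : cross u u = 0 := by
  ext i
  fin_cases i <;> simp [cross] <;> ring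

/-- The quadratic law `x² = T(x) x − N(x)` with trace `T(x) = a + b`. -/
lemma mul_self (x : Zorn k) :
    x * x = ⟨(x.a + x.b) * x.a - N x, (x.a + x.b) • x.α, (x.a + x.b) • x.β,
      (x.a + x.b) * x.b - N x⟩ := by
  ext i
  · simp only [mul_a, N]
    ring
  · simp only [mul_α, cross_self, Pi.zero_apply, Pi.smul_apply, smul_eq_mul]
    ring
  · simp only [mul_β, cross_self, Pi.zero_apply, Pi.smul_apply, smul_eq_mul]
    ring
  · simp only [mul_b, N, dot_comm x.β]
    ring

lemma mul_self_eq_neg_one_iff {x : Zorn k} (hx : N x = 1) :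
    x * x = -1 ↔ x.a + x.b = 0 := by
  rw [mul_self, hx, Zorn.ext_iff]
  simp only [neg_a, neg_α, neg_β, neg_b, one_a, one_α, one_β, one_b, neg_zero]
  constructor
  · rintro ⟨ha, -, -, hb⟩
    have hsq : (x.a + x.b) ^ 2 = 0 := by linear_combination ha + hb
    exact pow_eq_zero_iff two_ne_zero |>.mp hsq
  · intro ht
    simp [ht]

/-- A norm-one Zorn vector matrix `x` satisfies `x² = −1` iff either
(`α = β = 0`, `b = a⁻¹` and `a² = −1`) or (`(α, β) ≠ (0,0)` and `b = −a`). -/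
theorem sq_eq_neg_one_iff (x : Zorn k) (hx : N x = 1) :
    x * x = -1 ↔
      (x.α = 0 ∧ x.β = 0 ∧ x.b = x.a⁻¹ ∧ x.a ^ 2 = -1) ∨
      (¬(x.α = 0 ∧ x.β = 0) ∧ x.b = -x.a) := by
  rw [mul_self_eq_neg_one_iff hx, add_eq_zero_iff_eq_neg']
  by_cases hαβ : x.α = 0 ∧ x.β = 0
  · obtain ⟨hα, hβ⟩ := hαβ
    have hab : x.a * x.b = 1 := by simpa [N, dot, hα] using hx
    simp only [hα, hβ, true_and, not_true, false_and, or_false]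
    rw [and_iff_right (eq_inv_of_mul_eq_one_right hab)]
    constructor
    · intro hb
      linear_combination x.a * hb - hab
    · intro ha
      linear_combination x.b * ha - x.a * hab
  · simp only [hαβ, not_false_eq_true, true_and]
    exact (or_iff_right fun h => hαβ ⟨h.1, h.2.1⟩).symm

end Zorn
end

section
/- Every element of the Zorn vector matrix algebra over a field k is the sum of two elements of norm 1. -/
namespace Zorn

variable {k : Type*} [Field k]

/-!
If `α ≠ 0`, split `x = [[a, α], [β, b]]` as `[[1, 0], [β - w, 1]] + [[a - 1, α], [w, b - 1]]`:
the first summand has norm `1` for every `w`, and the second has norm `1` as soon as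
`α · w = (a - 1)(b - 1) - 1`, a linear equation in `w` that is solvable because `α ≠ 0`.
The case `β ≠ 0` is symmetric, and a diagonal element is
`[[a, e], [-e, 0]] + [[0, -e], [e, b]]` for a unit vector `e`.
-/

lemma add_def (y z : Zorn k) :
    y + z = ⟨y.a + z.a, y.α + z.α, y.β + z.β, y.b + z.b⟩ := rfl

lemma dot_eq_dotProduct (u v : Fin 3 → k) : dot u v = u ⬝ᵥ v := by
  simp [dot, dotProduct, Fin.sum_univ_three]

lemma exists_dot_eq {v : Fin 3 → k} (hv : v ≠ 0) (c : k) : ∃ w, dot v w = c := by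
  obtain ⟨i, hi⟩ := Function.ne_iff.mp hv
  exact ⟨Pi.single i (c / v i), by rw [dot_eq_dotProduct, dotProduct_single, mul_div_cancel₀ c hi]⟩

lemma exists_norm_one_add_of_α_ne_zero {x : Zorn k} (hα : x.α ≠ 0) :
    ∃ y z : Zorn k, N y = 1 ∧ N z = 1 ∧ x = y + z := by
  obtain ⟨w, hw⟩ := exists_dot_eq hα ((x.a - 1) * (x.b - 1) - 1)
  refine ⟨⟨1, 0, x.β - w, 1⟩, ⟨x.a - 1, x.α, w, x.b - 1⟩, by simp [N, dot], ?_, ?_⟩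
  · rw [N, hw]; ring
  · rw [add_def]; ext <;> simp

lemma exists_norm_one_add_of_β_ne_zero {x : Zorn k} (hβ : x.β ≠ 0) :
    ∃ y z : Zorn k, N y = 1 ∧ N z = 1 ∧ x = y + z := by
  obtain ⟨w, hw⟩ := exists_dot_eq hβ ((x.a - 1) * (x.b - 1) - 1)
  refine ⟨⟨1, x.α - w, 0, 1⟩, ⟨x.a - 1, w, x.β, x.b - 1⟩, by simp [N, dot], ?_, ?_⟩
  · rw [N, dot_comm, hw]; ring
  · rw [add_def]; ext <;> simp

lemma exists_norm_one_add_of_α_eq_zero_of_β_eq_zero {x : Zorn k} (hα : x.α = 0)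
    (hβ : x.β = 0) : ∃ y z : Zorn k, N y = 1 ∧ N z = 1 ∧ x = y + z := by
  refine ⟨⟨x.a, ![1, 0, 0], ![-1, 0, 0], 0⟩, ⟨0, ![-1, 0, 0], ![1, 0, 0], x.b⟩,
    by simp [N, dot], by simp [N, dot], ?_⟩
  rw [add_def]
  ext i <;> simp [hα, hβ] <;> fin_cases i <;> simp

/-- Every element of the Zorn vector matrix algebra is a sum of two elements of norm one. -/
theorem sum_of_two_norm_one (x : Zorn k) :
    ∃ y z : Zorn k, N y = 1 ∧ N z = 1 ∧ x = y + z := by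
  by_cases hα : x.α = 0
  · by_cases hβ : x.β = 0
    · exact exists_norm_one_add_of_α_eq_zero_of_β_eq_zero hα hβ
    · exact exists_norm_one_add_of_β_ne_zero hβ
  · exact exists_norm_one_add_of_α_ne_zero hα

end Zorn
end

section
/- The map σ on the Zorn vector matrix algebra over a field k defined by σ([[a,α],[β,b]]) = [[b,β],[α,a]] is an algebra automorphism if and only if k has characteristic 2. -/
namespace Zorn

variable {k : Type*} [Field k]

/-- The diagonal switch `σ [[a,α],[β,b]] = [[b,β],[α,a]]` is an algebra automorphism of the
Zorn algebra over `k` iff `k` has characteristic two. -/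
theorem diag_switch_automorphism_iff_char_two :
    (Function.Bijective (fun x : Zorn k => (⟨x.b, x.β, x.α, x.a⟩ : Zorn k)) ∧
     (∀ x y : Zorn k, (⟨(x + y).b, (x + y).β, (x + y).α, (x + y).a⟩ : Zorn k)
        = (⟨x.b, x.β, x.α, x.a⟩ : Zorn k) + ⟨y.b, y.β, y.α, y.a⟩) ∧
     (∀ (c : k) (x : Zorn k), (⟨(c • x).b, (c • x).β, (c • x).α, (c • x).a⟩ : Zorn k)
        = c • (⟨x.b, x.β, x.α, x.a⟩ : Zorn k)) ∧
     (⟨(1 : Zorn k).b, (1 : Zorn k).β, (1 : Zorn k).α, (1 : Zorn k).a⟩ : Zorn k) = 1 ∧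
     (∀ x y : Zorn k, (⟨(x * y).b, (x * y).β, (x * y).α, (x * y).a⟩ : Zorn k)
        = (⟨x.b, x.β, x.α, x.a⟩ : Zorn k) * ⟨y.b, y.β, y.α, y.a⟩))
    ↔ (2 : k) = 0 := by
  constructor
  · rintro ⟨-, -, -, -, hmul⟩
    have h : (((⟨0, ![1,0,0], 0, 0⟩ : Zorn k) * ⟨0, ![0,1,0], 0, 0⟩).β 2)
        = ((⟨0, 0, ![1,0,0], 0⟩ : Zorn k) * ⟨0, 0, ![0,1,0], 0⟩).α 2 :=
      congrArg (fun z : Zorn k => z.α 2)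
        (hmul ⟨0, ![1,0,0], 0, 0⟩ ⟨0, ![0,1,0], 0, 0⟩)
    have hL : (((⟨0, ![1,0,0], 0, 0⟩ : Zorn k) * ⟨0, ![0,1,0], 0, 0⟩).β 2) = 1 := by
      show (0:k) * _ + 0 * _ + cross ![1,0,0] ![0,1,0] 2 = 1
      norm_num [cross]
      rfl
    have hR : (((⟨0, 0, ![1,0,0], 0⟩ : Zorn k) * ⟨0, 0, ![0,1,0], 0⟩).α 2) = -1 := by
      show (0:k) * _ + 0 * _ - cross ![1,0,0] ![0,1,0] 2 = -1
      norm_num [cross]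
      rfl
    rw [hL, hR] at h
    linear_combination h
  · intro h2
    have hneg : ∀ a : k, -a = a := fun a => by linear_combination -a * h2
    refine ⟨?_, fun x y => rfl, fun c x => rfl, rfl, ?_⟩
    · have hinv : Function.Involutive (fun x : Zorn k => (⟨x.b, x.β, x.α, x.a⟩ : Zorn k)) :=
        fun x => rfl
      exact hinv.bijective
    · intro x y
      show (⟨dot x.β y.α + x.b * y.b, _, _, _⟩ : Zorn k) = _
      refine Zorn.ext ?_ ?_ ?_ ?_
      · show dot x.β y.α + x.b * y.b = x.b * y.b + dot x.β y.α
        ring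
      · funext i
        show y.a * x.β i + x.b * y.β i + cross x.α y.α i
            = x.b * y.β i + y.a * x.β i - cross x.α y.α i
        linear_combination cross x.α y.α i * h2
      · funext i
        show x.a * y.α i + y.b * x.α i - cross x.β y.β i
            = y.b * x.α i + x.a * y.α i + cross x.β y.β i
        linear_combination -(cross x.β y.β i) * h2
      · show x.a * y.a + dot x.α y.β = dot x.α y.β + x.a * y.a
        ring


end Zorn
end

section
/- Let C be a composition algebra over a field k, M ⊆ C the set of elements of norm 1, and g: M → M a bijection preserving multiplication (a multiplicative automorphism of the loop M). If x, y ∈ M satisfy x + y ∈ M, then g(x + y) = g(x) + g(y). -/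
namespace CompositionAlgebra

open QuadraticMap

variable {k C : Type*}

section CommRing

variable [CommRing k] [NonAssocRing C] [Module k C] (Q : QuadraticForm k C)

def conj (a : C) : C := polar Q a 1 • 1 - a

structure IsComposition : Prop where
  map_mul : ∀ x y : C, Q (x * y) = Q x * Q y
  separatingLeft : (polarBilin Q).SeparatingLeft

structure IsLoopHom (g : C → C) : Prop where
  mapsTo : Set.MapsTo g {x | Q x = 1} {x | Q x = 1}
  map_mul : ∀ x y, Q x = 1 → Q y = 1 → g (x * y) = g x * g y

variable {Q}

section Multiplicative

variable (hmul : ∀ x y : C, Q (x * y) = Q x * Q y)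
include hmul

theorem polar_mul_mul_left (a b c : C) : polar Q (a * b) (a * c) = Q a * polar Q b c := by
  simp only [polar, ← mul_add, hmul]; ring

theorem polar_mul_mul_right (a b c : C) : polar Q (a * c) (b * c) = polar Q a b * Q c := by
  simp only [polar, ← add_mul, hmul]; ring

theorem polar_mul_mul_add_polar_mul_mul (a b w z : C) :
    polar Q (a * b) (w * z) + polar Q (w * b) (a * z) = polar Q a w * polar Q b z := by
  have h := polar_mul_mul_left hmul (a + w) b z
  rw [add_mul, add_mul, polar_add_left, polar_add_right, polar_add_right,
    polar_mul_mul_left hmul, polar_mul_mul_left hmul, QuadraticMap.map_add Q] at h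
  linear_combination h

theorem polar_mul_left_eq (a b w : C) :
    polar Q (a * b) w = polar Q b 1 * polar Q a w - polar Q (w * b) a := by
  have h := polar_mul_mul_add_polar_mul_mul hmul a b w 1
  rw [mul_one, mul_one] at h
  linear_combination h

end Multiplicative

section UnitNorm

variable (h1 : Q 1 = 1)
include h1

theorem map_conj (a : C) : Q (conj Q a) = Q a := by
  rw [conj, sub_eq_add_neg, QuadraticMap.map_add Q, QuadraticMap.map_neg, QuadraticMap.map_smul,
    polar_neg_right, polar_smul_left, polar_comm Q 1, h1]
  simp only [smul_eq_mul]; ring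

theorem polar_conj_one (a : C) : polar Q (conj Q a) 1 = polar Q a 1 := by
  rw [conj, polar_sub_left, polar_smul_left, polar_self, h1]
  simp only [smul_eq_mul]; ring

theorem conj_conj (a : C) : conj Q (conj Q a) = a := by
  rw [conj, polar_conj_one h1, conj, sub_sub_cancel]

theorem polar_mul_conj_one (hmul : ∀ x y : C, Q (x * y) = Q x * Q y) (a b : C) :
    polar Q (a * conj Q b) 1 = polar Q a b := by
  rw [polar_mul_left_eq hmul, one_mul, polar_conj_one h1, conj, polar_sub_left,
    polar_smul_left, polar_comm Q 1 a, polar_comm Q b a]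
  simp only [smul_eq_mul]; ring

end UnitNorm

theorem eq_of_polar_eq (hsep : (polarBilin Q).SeparatingLeft) {a b : C}
    (h : ∀ z, polar Q a z = polar Q b z) : a = b :=
  sub_eq_zero.mp <| hsep _ fun z => by simp [h]

section Composition

variable [SMulCommClass k C C] (hQ : IsComposition Q)
include hQ

theorem mul_mul_conj (a b : C) : a * b * conj Q b = Q b • a := by
  refine eq_of_polar_eq hQ.separatingLeft fun z => ?_
  have hab := polar_mul_left_eq hQ.map_mul (a * b) b z
  rw [polar_mul_mul_right hQ.map_mul, polar_comm Q z a] at hab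
  rw [conj, mul_sub, mul_smul_comm, mul_one, polar_sub_left, polar_smul_left, polar_smul_left, hab]
  simp only [smul_eq_mul]; ring

theorem mul_self_eq (a : C) : a * a = polar Q a 1 • a - Q a • 1 := by
  have h := mul_mul_conj hQ 1 a
  rw [one_mul, conj, mul_sub, mul_smul_comm, mul_one] at h
  rw [← h]; abel

theorem mul_conj_mul (h1 : Q 1 = 1) (a b : C) : a * conj Q b * b = Q b • a := by
  simpa [map_conj h1, conj_conj h1] using mul_mul_conj hQ a (conj Q b)

end Composition

end CommRing

section Field

variable [Field k] [NonAssocRing C] [Module k C] {Q : QuadraticForm k C}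

theorem mul_right_cancel_of_map_ne_zero [SMulCommClass k C C] (hQ : IsComposition Q) {a a' b : C}
    (hb : Q b ≠ 0) (h : a * b = a' * b) : a = a' :=
  smul_right_injective C hb <| show Q b • a = Q b • a' by
    rw [← mul_mul_conj hQ, h, mul_mul_conj hQ]

variable (h1 : Q 1 = 1)
include h1

theorem nontrivial_of_map_one : Nontrivial C :=
  ⟨⟨1, 0, fun h => by simp [h] at h1⟩⟩

theorem smul_one_eq_one_or_eq_neg_one {c : k} (hc : Q (c • 1) = 1) :
    c • (1 : C) = 1 ∨ c • (1 : C) = -1 := by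
  rw [QuadraticMap.map_smul, h1, smul_eq_mul, mul_one, mul_self_eq_one_iff] at hc
  rcases hc with rfl | rfl
  · exact .inl (one_smul k 1)
  · exact .inr (neg_one_smul k 1)

theorem neg_one_eq_one_iff : (-1 : C) = 1 ↔ (2 : k) = 0 := by
  have := nontrivial_of_map_one h1
  rw [neg_eq_iff_add_eq_zero, ← two_smul k, smul_eq_zero, or_iff_left one_ne_zero]

variable [SMulCommClass k C C] (hQ : IsComposition Q)
include hQ

theorem eq_one_or_eq_neg_one_of_mul_self (h2 : (2 : k) ≠ 0) {a : C} (ha : Q a = 1)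
    (haa : a * a = 1) : a = 1 ∨ a = -1 := by
  have := nontrivial_of_map_one h1
  set τ := polar Q a 1
  have hτa : τ • a = (2 : k) • 1 := by
    have h := mul_self_eq hQ a
    rw [haa, ha] at h
    linear_combination (norm := module) -h
  have hτ : τ ≠ 0 := by
    rintro hτ
    rw [hτ, zero_smul, eq_comm, smul_eq_zero] at hτa
    exact hτa.elim h2 one_ne_zero
  have hsc : a = (τ⁻¹ * 2) • 1 := by
    rw [mul_smul, ← hτa, inv_smul_smul₀ hτ]
  rw [hsc] at ha ⊢
  exact smul_one_eq_one_or_eq_neg_one h1 ha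

theorem mul_self_eq_neg_sub_one [IsScalarTower k C C] {a : C} (ha : Q a = 1)
    (haaa : a * a * a = 1) (hne : a ≠ 1) : a * a = -a - 1 := by
  have := nontrivial_of_map_one h1
  set τ := polar Q a 1
  have hsq : a * a = τ • a - 1 := by rw [mul_self_eq hQ a, ha, one_smul]
  by_cases hτ : τ = -1
  · rw [hsq, hτ, neg_one_smul]
  -- otherwise `a` is a scalar multiple of `1`, hence `±1`, and neither is a nontrivial cube root
  have hτ' : τ + 1 ≠ 0 := fun h => hτ (eq_neg_of_add_eq_zero_left h)
  have hlin : (τ + 1) • ((τ - 1) • a - 1) = 0 := by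
    rw [hsq, sub_mul, smul_mul_assoc, hsq, one_mul] at haaa
    linear_combination (norm := module) haaa
  rw [smul_eq_zero, or_iff_right hτ', sub_eq_zero] at hlin
  have hτ1 : τ - 1 ≠ 0 := by
    rintro h
    rw [h, zero_smul] at hlin
    exact zero_ne_one hlin
  have hsc : a = (τ - 1)⁻¹ • 1 := by rw [← hlin, inv_smul_smul₀ hτ1]
  rw [hsc] at ha
  rcases smul_one_eq_one_or_eq_neg_one h1 ha with h | h
  · exact absurd (hsc.trans h) hne
  · obtain rfl : a = -1 := hsc.trans h
    exact (hne (by simpa using haaa)).elim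

namespace IsLoopHom

variable {g : C → C} (hg : IsLoopHom Q g)
include hg

theorem map_one : g 1 = 1 :=
  mul_right_cancel_of_map_ne_zero hQ (b := g 1) (by rw [hg.mapsTo h1]; exact one_ne_zero) <| by
    rw [← hg.map_mul 1 1 h1 h1, one_mul, one_mul]

variable (hinj : Set.InjOn g {x | Q x = 1})
include hinj

theorem map_neg_one : g (-1) = -1 := by
  have hm1 : Q (-1 : C) = 1 := by rw [QuadraticMap.map_neg, h1]
  by_cases h2 : (2 : k) = 0
  · rw [(neg_one_eq_one_iff h1).mpr h2]
    exact hg.map_one h1 hQ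
  have hsq : g (-1) * g (-1) = 1 := by
    rw [← hg.map_mul _ _ hm1 hm1, neg_one_mul, neg_neg, hg.map_one h1 hQ]
  refine (eq_one_or_eq_neg_one_of_mul_self h1 hQ h2 (hg.mapsTo hm1) hsq).resolve_left fun h => ?_
  exact h2 <| (neg_one_eq_one_iff h1).mp <| hinj hm1 h1 (h.trans (hg.map_one h1 hQ).symm)

theorem map_neg {z : C} (hz : Q z = 1) : g (-z) = -g z := by
  have hm1 : Q (-1 : C) = 1 := by rw [QuadraticMap.map_neg, h1]
  rw [← neg_one_mul, hg.map_mul _ _ hm1 hz, hg.map_neg_one h1 hQ hinj, neg_one_mul]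

theorem map_add_one [IsScalarTower k C C] {u : C} (hu : Q u = 1) (huu : u * u = -u - 1) :
    g (u + 1) = g u + 1 := by
  have hu2 : Q (u * u) = 1 := by rw [hQ.map_mul, hu, mul_one]
  have hv : g u * g u = -g u - 1 := by
    by_cases hu1 : u = 1
    · -- possible only in characteristic 3
      subst hu1
      rwa [hg.map_one h1 hQ]
    refine mul_self_eq_neg_sub_one h1 hQ (hg.mapsTo hu) ?_ ?_
    · have hu3 : u * u * u = 1 := by rw [huu, sub_mul, neg_mul, huu, one_mul]; abel
      rw [← hg.map_mul _ _ hu hu, ← hg.map_mul _ _ hu2 hu, hu3, hg.map_one h1 hQ]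
    · exact fun h => hu1 (hinj hu h1 (h.trans (hg.map_one h1 hQ).symm))
  calc g (u + 1) = g (-(u * u)) := by rw [huu, neg_sub, sub_neg_eq_add, add_comm]
    _ = -(g u * g u) := by rw [hg.map_neg h1 hQ hinj hu2, hg.map_mul _ _ hu hu]
    _ = g u + 1 := by rw [hv]; abel

theorem map_add [IsScalarTower k C C] {x y : C} (hx : Q x = 1) (hy : Q y = 1)
    (hxy : Q (x + y) = 1) : g (x + y) = g x + g y := by
  set u := x * conj Q y
  have hu : Q u = 1 := by rw [hQ.map_mul, map_conj h1, hx, hy, mul_one]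
  have hpolar : polar Q u 1 = -1 := by
    rw [polar_mul_conj_one h1 hQ.map_mul, polar, hxy, hx, hy]; norm_num
  have huu : u * u = -u - 1 := by rw [mul_self_eq hQ, hpolar, hu, neg_one_smul, one_smul]
  have hu1 : Q (u + 1) = 1 := by rw [QuadraticMap.map_add Q, hu, h1, hpolar]; norm_num
  have huy : u * y = x := by rw [mul_conj_mul hQ h1, hy, one_smul]
  calc g (x + y) = g ((u + 1) * y) := by rw [add_mul, huy, one_mul]
    _ = (g u + 1) * g y := by rw [hg.map_mul _ _ hu1 hy, hg.map_add_one h1 hQ hinj hu huu]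
    _ = g x + g y := by rw [add_mul, one_mul, ← hg.map_mul _ _ hu hy, huy]

end IsLoopHom

end Field

end CompositionAlgebra

theorem aut_additive_general (k C : Type*) [Field k] [NonAssocRing C] [Module k C]
    [SMulCommClass k C C] [IsScalarTower k C C]
    (N : C → k)
    (hN_smul : ∀ (a : k) (x : C), N (a • x) = a ^ 2 * N x)
    (hpolar_add : ∀ x y z : C, polarForm N (x + y) z = polarForm N x z + polarForm N y z)
    (hpolar_smul : ∀ (a : k) (x y : C), polarForm N (a • x) y = a * polarForm N x y)
    (hN_nondeg : ∀ x : C, (∀ y : C, polarForm N x y = 0) → x = 0)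
    (hN_mul : ∀ x y : C, N (x * y) = N x * N y)
    (g : C → C)
    (hg_bij : Set.BijOn g {x : C | N x = 1} {x : C | N x = 1})
    (hg_mul : ∀ x y : C, N x = 1 → N y = 1 → g (x * y) = g x * g y)
    (x y : C) (hx : N x = 1) (hy : N y = 1) (hxy : N (x + y) = 1) :
    g (x + y) = g x + g y := by
  let Q : QuadraticForm k C :=
    QuadraticMap.ofPolar N (fun a x => by rw [hN_smul, sq, smul_eq_mul]) hpolar_add hpolar_smul
  have hQ : CompositionAlgebra.IsComposition Q := ⟨hN_mul, fun z hz => hN_nondeg z hz⟩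
  have h1 : Q 1 = 1 := by
    have h := hN_mul x 1
    rw [mul_one, hx] at h
    show N 1 = 1
    linear_combination -h
  exact CompositionAlgebra.IsLoopHom.map_add h1 hQ ⟨hg_bij.mapsTo, hg_mul⟩ hg_bij.injOn hx hy hxy

/-- A multiplicative automorphism of the norm-one loop of a composition algebra is
additive whenever the sum of two norm-one elements again has norm one. -/
theorem aut_additive (k C : Type*) [Field k] [NonAssocRing C] [Module k C]
    [SMulCommClass k C C] [IsScalarTower k C C] [FiniteDimensional k C]
    (N : C → k)
    (hN_smul : ∀ (a : k) (x : C), N (a • x) = a ^ 2 * N x)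
    (hpolar_add : ∀ x y z : C, polarForm N (x + y) z = polarForm N x z + polarForm N y z)
    (hpolar_smul : ∀ (a : k) (x y : C), polarForm N (a • x) y = a * polarForm N x y)
    (hN_nondeg : ∀ x : C, (∀ y : C, polarForm N x y = 0) → x = 0)
    (hN_mul : ∀ x y : C, N (x * y) = N x * N y)
    (g : C → C)
    (hg_bij : Set.BijOn g {x : C | N x = 1} {x : C | N x = 1})
    (hg_mul : ∀ x y : C, N x = 1 → N y = 1 → g (x * y) = g x * g y)
    (x y : C) (hx : N x = 1) (hy : N y = 1) (hxy : N (x + y) = 1) :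
    g (x + y) = g x + g y :=
  aut_additive_general k C N hN_smul hpolar_add hpolar_smul hN_nondeg hN_mul g hg_bij hg_mul x y hx
    hy hxy
end
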